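/- Let A and A' be nonnegative self-adjoint operators on a complex Hilbert space H. Then the modified Hausdorff distance of their spectra satisfies d̃_H(σ(A), σ(A')) ≤ ‖(A + I)^{-1} − (A' + I)^{-1}‖, where d̃_H(X,Y) = d_H({(1+x)^{-1} : x ∈ X}, {(1+y)^{-1} : y ∈ Y}). -/

import Mathlib

/- A nonnegative self-adjoint (possibly unbounded) operator `A` on a complex Hilbert
space is encoded by its resolvent `B = (A + I)⁻¹`, a bounded self-adjoint operator with
`σ(B) ⊆ (0,1]`; then `σ(A) = {x ≥ 0 : (1+x)⁻¹ ∈ σ(B)}` and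
`‖(A+I)⁻¹ − (A'+I)⁻¹‖ = ‖B − B'‖`. -/

/-- The spectrum of the nonnegative self-adjoint operator whose resolvent is `B`. -/
def resSpec {H : Type*} [NormedAddCommGroup H] [InnerProductSpace ℂ H] [CompleteSpace H]
    (B : H →L[ℂ] H) : Set ℝ :=
  {x : ℝ | 0 ≤ x ∧ (1 + x)⁻¹ ∈ spectrum ℝ B}

/-!
The map `x ↦ (1 + x)⁻¹` carries `σ(A)` onto `σ(B)`, so the claim is that the spectra of two
self-adjoint elements `a, b` of a C⋆-algebra are within Hausdorff distance `‖a - b‖`.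
For self-adjoint `b` the norm equals the spectral radius, so `‖(l - b)⁻¹‖ ≤ 1 / dist(l, σ(b))`.
If some `l ∈ σ(a)` had `dist(l, σ(b)) > ‖a - b‖`, then `l - a` would be within
`‖(l - b)⁻¹‖⁻¹` of the unit `l - b`, hence itself a unit (Neumann series), a contradiction.
-/

open Metric

section CStarAlgebra

variable {A : Type*} [CStarAlgebra A]

lemma IsSelfAdjoint.norm_inv_le_of_forall_le_abs_spectrum {u : Aˣ} (hu : IsSelfAdjoint (u : A))
    {d : ℝ} (hd : 0 < d) (h : ∀ s ∈ spectrum ℝ (u : A), d ≤ |s|) : ‖(↑u⁻¹ : A)‖ ≤ d⁻¹ := by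
  have hu_inv : IsSelfAdjoint (↑u⁻¹ : A) :=
    congrArg Units.val (IsSelfAdjoint.inv (Units.ext hu.star_eq : IsSelfAdjoint u)).star_eq
  rw [← hu_inv.toReal_spectralRadius_eq_norm]
  refine ENNReal.toReal_le_of_le_ofReal (inv_nonneg.mpr hd.le) (iSup₂_le fun μ hμ => ?_)
  rw [← spectrum.map_inv, Set.mem_inv] at hμ
  have hμd : d ≤ |μ|⁻¹ := abs_inv μ ▸ h _ hμ
  exact (ofReal_norm μ).symm.trans_le <|
    ENNReal.ofReal_le_ofReal ((le_inv_comm₀ hd (hd.trans_le hμd |> inv_pos.mp)).mp hμd)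

lemma IsSelfAdjoint.infDist_spectrum_le_norm_sub {a b : A} (hb : IsSelfAdjoint b) {l : ℝ}
    (hl : l ∈ spectrum ℝ a) : infDist l (spectrum ℝ b) ≤ ‖a - b‖ := by
  nontriviality A
  by_contra! h
  set d := infDist l (spectrum ℝ b)
  have hd : 0 < d := (norm_nonneg _).trans_lt h
  have hlb : l ∉ spectrum ℝ b := fun hm => hd.ne' (infDist_zero_of_mem hm)
  obtain ⟨u, hu⟩ := spectrum.notMem_iff.mp hlb
  have hu_sa : IsSelfAdjoint (u : A) := hu ▸ (IsSelfAdjoint.algebraMap A (.all l)).sub hb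
  have hgap : ∀ s ∈ spectrum ℝ (u : A), d ≤ |s| := by
    rw [hu, ← spectrum.singleton_sub_eq]
    rintro _ ⟨x, hx, t, ht, rfl⟩
    rw [Set.mem_singleton_iff.mp hx]
    simpa [Real.dist_eq] using infDist_le_dist_of_mem (x := l) ht
  have hnear : ‖(algebraMap ℝ A l - a) - u‖ < ‖(↑u⁻¹ : A)‖⁻¹ := calc
    ‖(algebraMap ℝ A l - a) - u‖ = ‖a - b‖ := by rw [hu, ← norm_neg]; congr 1; abel
    _ < d := h
    _ ≤ ‖(↑u⁻¹ : A)‖⁻¹ :=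
      (le_inv_comm₀ hd (Units.norm_pos _)).mpr <|
        hu_sa.norm_inv_le_of_forall_le_abs_spectrum hd hgap
  exact spectrum.notMem_iff.mpr (u.ofNearby _ hnear).isUnit hl

end CStarAlgebra

lemma image_inv_one_add_resSpec {H : Type*} [NormedAddCommGroup H] [InnerProductSpace ℂ H]
    [CompleteSpace H] {B : H →L[ℂ] H} (hsB : spectrum ℝ B ⊆ Set.Ioc 0 1) :
    (fun x : ℝ => (1 + x)⁻¹) '' resSpec B = spectrum ℝ B := by
  refine (Set.image_subset_iff.mpr fun x hx => hx.2).antisymm fun t ht => ?_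
  obtain ⟨ht0, ht1⟩ := hsB ht
  have hx : (1 + (t⁻¹ - 1))⁻¹ = t := by rw [add_sub_cancel, inv_inv]
  exact ⟨t⁻¹ - 1, ⟨sub_nonneg.mpr (one_le_inv₀ ht0 |>.mpr ht1), by rwa [hx]⟩, hx⟩

/-- For nonnegative self-adjoint operators `A, A'` (given via their resolvents `B, B'`),
`d̃_H(σ(A), σ(A')) ≤ ‖(A+I)⁻¹ − (A'+I)⁻¹‖`, where
`d̃_H(X,Y) = d_H({(1+x)⁻¹ : x ∈ X}, {(1+y)⁻¹ : y ∈ Y})`. -/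
theorem stmt5 {H : Type*} [NormedAddCommGroup H] [InnerProductSpace ℂ H] [CompleteSpace H]
    (B B' : H →L[ℂ] H) (hB : IsSelfAdjoint B) (hB' : IsSelfAdjoint B')
    (hsB : spectrum ℝ B ⊆ Set.Ioc 0 1) (hsB' : spectrum ℝ B' ⊆ Set.Ioc 0 1) :
    Metric.hausdorffDist
      ((fun x : ℝ => (1 + x)⁻¹) '' resSpec B)
      ((fun x : ℝ => (1 + x)⁻¹) '' resSpec B')
      ≤ ‖B - B'‖ := by
  rw [image_inv_one_add_resSpec hsB, image_inv_one_add_resSpec hsB']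
  refine hausdorffDist_le_of_infDist (norm_nonneg _)
    (fun l hl => hB'.infDist_spectrum_le_norm_sub hl) fun l hl => ?_
  rw [norm_sub_rev]
  exact hB.infDist_spectrum_le_norm_sub hl
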